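/- arXiv:0707.1243 — 4 statements merged into one kernel-verified Lean document; each statement's English description precedes it below -/
import Mathlib

section
/- Let d ≥ 1, l ∈ ℤ, and let (χ_i)_{i∈I} be a family of measurable functions mapping 𝒯₁ × ℝ^d × ℝ^d × ℝ^d into ℝ such that: (a) for all i ∈ I, (s,t) ∈ 𝒯₁ and ζ ∈ ℝ^d, the map (x,y) ↦ χ_i(s,t,x,y,ζ) is infinitely differentiable; (b) for all multi-indices α, β ∈ ℕ^d there exist constants c₁ ≥ 0 and c₂ > 0 such that for all i ∈ I, (s,t) ∈ 𝒯₁ and x, y, ζ ∈ ℝ^d, |∂_x^α ∂_y^β χ_i(s,t,x,y,ζ)| ≤ c₁ t^{−(|α|+|β|+d+l)/2} exp(−c₂‖x−y‖²/t − c₂‖ζ‖²). Define 𝓘(χ_i)(s,t,x,y) = ∫_{ℝ^d} χ_i(s,t,x,y,ζ) dζ. Then {𝓘(χ_i) : i ∈ I} is a bounded subset of 𝓗_l(ℝ^d): each 𝓘(χ_i)(s,t,·,·) is infinitely differentiable and for every α, β ∈ ℕ^d there exist C₁ ≥ 0 and C₂ > 0, independent of i ∈ I, with |∂_x^α ∂_y^β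 𝓘(χ_i)(s,t,x,y)| ≤ C₁ t^{−(|α|+|β|+d+l)/2} exp(−C₂‖x−y‖²/t) for all (s,t) ∈ 𝒯₁ and x, y ∈ ℝ^d. -/
/-!
Since every partial derivative of `χ_i(s,t,·,·,ζ)` is dominated by `c₁ t^{-(…)/2} e^{-c₂‖ζ‖²}`,
an integrable function of `ζ` that does not depend on `(x, y)`, one may differentiate under the
integral sign arbitrarily often; by Schwarz's theorem the order of differentiation is irrelevant,
so the bounds on the mixed derivatives `∂_x^α ∂_y^β` dominate every iterated derivative. Hence
`∂_x^α ∂_y^β 𝓘(χ_i) = ∫ ∂_x^α ∂_y^β χ_i dζ`, and integrating the factor `e^{-c₂‖ζ‖²}` out of the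
bound gives `C₁ = c₁ ∫ e^{-c₂‖ζ‖²} dζ` and `C₂ = c₂`.
-/

open MeasureTheory Real

noncomputable section

/-- `ℝ^d` with the Euclidean norm. -/
abbrev Eu (d : ℕ) := EuclideanSpace ℝ (Fin d)

/-- Iterated partial derivative along a list of coordinate directions. -/
noncomputable def pderivs {d : ℕ} : List (Fin d) → (Eu d → ℝ) → Eu d → ℝ
  | [], f => f
  | i :: l, f => pderivs l fun x => fderiv ℝ f x (EuclideanSpace.single i 1)

/-- The list of coordinates (with multiplicities) associated to a multi-index `m : ℕ^d`. -/
def mToList {d : ℕ} (m : Fin d → ℕ) : List (Fin d) :=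
  (List.finRange d).flatMap fun i => List.replicate (m i) i

/-- The partial derivative `∂^m` associated to a multi-index `m : ℕ^d`. -/
noncomputable def pderivM {d : ℕ} (m : Fin d → ℕ) (f : Eu d → ℝ) : Eu d → ℝ :=
  pderivs (mToList m) f

/-- The length `|m| = m₁ + ⋯ + m_d` of a multi-index. -/
def mlen {d : ℕ} (m : Fin d → ℕ) : ℕ := ∑ i, m i

/-- Mixed partial derivative `∂_x^α ∂_y^β f(x,y)` of a function of two `ℝ^d` variables. -/
noncomputable def D2 {d : ℕ} (α β : Fin d → ℕ) (f : Eu d → Eu d → ℝ) (x y : Eu d) : ℝ :=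
  pderivM α (fun x' => pderivM β (f x') y) x

open ContDiff

section IteratedDirDeriv

variable {E F : Type*} [NormedAddCommGroup E] [NormedSpace ℝ E]
  [NormedAddCommGroup F] [NormedSpace ℝ F]

/-- `iteratedDirDeriv [v₁, …, vₙ] f = ∂_{vₙ} ⋯ ∂_{v₁} f`. -/
def iteratedDirDeriv : List E → (E → F) → E → F
  | [], f => f
  | v :: L, f => iteratedDirDeriv L fun p => fderiv ℝ f p v

theorem iteratedDirDeriv_append (L L' : List E) (f : E → F) :
    iteratedDirDeriv (L ++ L') f = iteratedDirDeriv L' (iteratedDirDeriv L f) := by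
  induction L generalizing f with
  | nil => rfl
  | cons v L ih => exact ih _

theorem ContDiff.fderiv_apply_const {f : E → F} (hf : ContDiff ℝ ∞ f) (v : E) :
    ContDiff ℝ ∞ fun p => fderiv ℝ f p v :=
  (hf.fderiv_right (m := ∞) le_rfl).clm_apply contDiff_const

theorem contDiff_iteratedDirDeriv (L : List E) {f : E → F} (hf : ContDiff ℝ ∞ f) :
    ContDiff ℝ ∞ (iteratedDirDeriv L f) := by
  induction L generalizing f with
  | nil => exact hf
  | cons v L ih => exact ih (hf.fderiv_apply_const v)

theorem iteratedDirDeriv_swap (v w : E) (L : List E) {f : E → F} (hf : ContDiff ℝ ∞ f) :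
    iteratedDirDeriv (v :: w :: L) f = iteratedDirDeriv (w :: v :: L) f := by
  have hdf : Differentiable ℝ (fderiv ℝ f) :=
    (hf.fderiv_right (m := ∞) le_rfl).differentiable (by simp)
  have hsecond : ∀ p u z, fderiv ℝ (fun q => fderiv ℝ f q u) p z = fderiv ℝ (fderiv ℝ f) p z u := by
    intro p u z
    rw [fderiv_clm_apply (hdf p) (differentiableAt_const u)]
    simp
  have hsymm : (fun p => fderiv ℝ (fun q => fderiv ℝ f q v) p w)
      = fun p => fderiv ℝ (fun q => fderiv ℝ f q w) p v := by
    funext p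
    rw [hsecond, hsecond]
    exact hf.contDiffAt.isSymmSndFDerivAt (by simp; norm_cast) w v
  simp only [iteratedDirDeriv, hsymm]

theorem List.Perm.iteratedDirDeriv_eq {L L' : List E} (hp : L.Perm L') {f : E → F}
    (hf : ContDiff ℝ ∞ f) : iteratedDirDeriv L f = iteratedDirDeriv L' f := by
  induction hp generalizing f with
  | nil => rfl
  | cons v _ ih => exact ih (hf.fderiv_apply_const v)
  | swap v w L => exact iteratedDirDeriv_swap w v L hf
  | trans _ _ ih₁ ih₂ => rw [ih₁ hf, ih₂ hf]

theorem aestronglyMeasurable_iteratedDirDeriv {α : Type*} [MeasurableSpace α] {μ : Measure α}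
    {G : E → α → F} (hG : ∀ ζ, ContDiff ℝ ∞ (G · ζ)) (hGm : ∀ p, AEStronglyMeasurable (G p) μ)
    (L : List E) (p : E) : AEStronglyMeasurable (fun ζ => iteratedDirDeriv L (G · ζ) p) μ := by
  induction L using List.reverseRecOn generalizing p with
  | nil => exact hGm p
  | append_singleton L v ih =>
    simp only [iteratedDirDeriv_append, iteratedDirDeriv]
    refine aestronglyMeasurable_of_tendsto_ae (u := Filter.atTop)
      (f := fun (n : ℕ) ζ => (n : ℝ) • (iteratedDirDeriv L (G · ζ) (p + (n : ℝ)⁻¹ • v)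
        - iteratedDirDeriv L (G · ζ) p))
      (fun n => ((ih _).sub (ih p)).const_smul _) (Filter.Eventually.of_forall fun ζ => ?_)
    have hderiv := ((contDiff_iteratedDirDeriv L (hG ζ)).differentiable (by simp) p).hasFDerivAt
    exact hderiv.lim v (by simpa using tendsto_natCast_atTop_atTop (R := ℝ))

end IteratedDirDeriv

section DominatedSmoothFamily

variable {E F ι α : Type*} [NormedAddCommGroup E] [NormedSpace ℝ E]
  [NormedAddCommGroup F] [NormedSpace ℝ F] [MeasurableSpace α] {μ : Measure α}

def Module.Basis.coordL [Finite ι] (b : Module.Basis ι ℝ E) (k : ι) : StrongDual ℝ E :=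
  (ContinuousLinearMap.proj k).comp (b.equivFunL : E →L[ℝ] ι → ℝ)

theorem Module.Basis.coordL_apply [Finite ι] (b : Module.Basis ι ℝ E) (k : ι) (v : E) :
    b.coordL k v = b.repr v k := by
  simp [Module.Basis.coordL]

theorem ContinuousLinearMap.eq_sum_smulRight_coordL [Fintype ι] (b : Module.Basis ι ℝ E)
    (f : E →L[ℝ] F) :
    f = ∑ k, (b.coordL k).smulRight (f (b k)) := by
  ext v
  simp only [sum_apply, ContinuousLinearMap.smulRight_apply, Module.Basis.coordL_apply]
  conv_lhs => rw [← b.sum_repr v]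
  simp only [map_sum, map_smul]

structure DominatedSmoothFamily (b : Module.Basis ι ℝ E) (μ : Measure α) (G : E → α → F) :
    Prop where
  contDiff : ∀ ζ, ContDiff ℝ ∞ (G · ζ)
  aestronglyMeasurable : ∀ p, AEStronglyMeasurable (G p) μ
  dominated : ∀ L : List ι, ∃ g : α → ℝ, Integrable g μ ∧
    ∀ p ζ, ‖iteratedDirDeriv (L.map b) (G · ζ) p‖ ≤ g ζ

namespace DominatedSmoothFamily

variable {b : Module.Basis ι ℝ E} {G : E → α → F}

theorem fderiv_apply (h : DominatedSmoothFamily b μ G) (k : ι) :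
    DominatedSmoothFamily b μ fun p ζ => fderiv ℝ (G · ζ) p (b k) where
  contDiff ζ := (h.contDiff ζ).fderiv_apply_const (b k)
  aestronglyMeasurable p :=
    aestronglyMeasurable_iteratedDirDeriv h.contDiff h.aestronglyMeasurable [b k] p
  dominated L := h.dominated (k :: L)

theorem integrable (h : DominatedSmoothFamily b μ G) (p : E) : Integrable (G p) μ := by
  obtain ⟨g, hg, hbound⟩ := h.dominated []
  exact hg.mono' (h.aestronglyMeasurable p) (Filter.Eventually.of_forall (hbound p))

variable [Fintype ι]

theorem aestronglyMeasurable_fderiv (h : DominatedSmoothFamily b μ G) (p : E) :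
    AEStronglyMeasurable (fun ζ => fderiv ℝ (G · ζ) p) μ := by
  rw [show (fun ζ => fderiv ℝ (G · ζ) p) = fun ζ => ∑ k, (b.coordL k).smulRight
      (fderiv ℝ (G · ζ) p (b k)) from
    funext fun ζ => ContinuousLinearMap.eq_sum_smulRight_coordL b _]
  refine Finset.aestronglyMeasurable_fun_sum _ fun k _ => ?_
  exact (ContinuousLinearMap.smulRightL ℝ E F (b.coordL k)).continuous.comp_aestronglyMeasurable
    ((h.fderiv_apply k).aestronglyMeasurable p)

theorem exists_integrable_bound_fderiv (h : DominatedSmoothFamily b μ G) :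
    ∃ g : α → ℝ, Integrable g μ ∧ ∀ p ζ, ‖fderiv ℝ (G · ζ) p‖ ≤ g ζ := by
  choose g hg hbound using fun k => (h.fderiv_apply k).dominated []
  refine ⟨fun ζ => ∑ k, ‖b.coordL k‖ * g k ζ,
    integrable_finsetSum _ fun k _ => (hg k).const_mul _, fun p ζ => ?_⟩
  rw [ContinuousLinearMap.eq_sum_smulRight_coordL b (fderiv ℝ (G · ζ) p)]
  refine (norm_sum_le _ _).trans (Finset.sum_le_sum fun k _ => ?_)
  rw [ContinuousLinearMap.norm_smulRight_apply]
  exact mul_le_mul_of_nonneg_left (hbound k p ζ) (norm_nonneg _)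

theorem integrable_fderiv (h : DominatedSmoothFamily b μ G) (p : E) :
    Integrable (fun ζ => fderiv ℝ (G · ζ) p) μ := by
  obtain ⟨g, hg, hbound⟩ := h.exists_integrable_bound_fderiv
  exact hg.mono' (h.aestronglyMeasurable_fderiv p) (Filter.Eventually.of_forall (hbound p))

theorem hasFDerivAt_integral (h : DominatedSmoothFamily b μ G) (p : E) :
    HasFDerivAt (fun q => ∫ ζ, G q ζ ∂μ) (∫ ζ, fderiv ℝ (G · ζ) p ∂μ) p := by
  obtain ⟨g, hg, hbound⟩ := h.exists_integrable_bound_fderiv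
  exact hasFDerivAt_integral_of_dominated_of_fderiv_le Filter.univ_mem
    (Filter.Eventually.of_forall h.aestronglyMeasurable) (h.integrable p)
    (h.aestronglyMeasurable_fderiv p) (Filter.Eventually.of_forall fun ζ q _ => hbound q ζ) hg
    (Filter.Eventually.of_forall fun ζ q _ =>
      ((h.contDiff ζ).differentiable (by simp) q).hasFDerivAt)

theorem fderiv_integral_apply (h : DominatedSmoothFamily b μ G) (p v : E) :
    fderiv ℝ (fun q => ∫ ζ, G q ζ ∂μ) p v = ∫ ζ, fderiv ℝ (G · ζ) p v ∂μ := by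
  rw [(h.hasFDerivAt_integral p).fderiv, ContinuousLinearMap.integral_apply (h.integrable_fderiv p)]

theorem contDiff_integral (h : DominatedSmoothFamily b μ G) :
    ContDiff ℝ ∞ fun p => ∫ ζ, G p ζ ∂μ := by
  refine contDiff_infty.mpr fun n => ?_
  induction n generalizing G with
  | zero =>
    exact contDiff_zero.mpr
      (Differentiable.continuous fun p => (h.hasFDerivAt_integral p).differentiableAt)
  | succ n ih =>
    have hfderiv : fderiv ℝ (fun p => ∫ ζ, G p ζ ∂μ)
        = fun p => ∑ k, (b.coordL k).smulRight (∫ ζ, fderiv ℝ (G · ζ) p (b k) ∂μ) := by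
      funext p
      rw [ContinuousLinearMap.eq_sum_smulRight_coordL b (fderiv ℝ _ p)]
      simp only [h.fderiv_integral_apply]
    rw [Nat.cast_succ]
    refine contDiff_succ_iff_fderiv.mpr
      ⟨fun p => (h.hasFDerivAt_integral p).differentiableAt, fun hω => absurd hω (by simp), ?_⟩
    rw [hfderiv]
    exact ContDiff.sum fun k _ => contDiff_const.smulRight (ih (h.fderiv_apply k))

theorem iteratedDirDeriv_integral (h : DominatedSmoothFamily b μ G) (L : List ι) :
    iteratedDirDeriv (L.map b) (fun p => ∫ ζ, G p ζ ∂μ)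
      = fun p => ∫ ζ, iteratedDirDeriv (L.map b) (G · ζ) p ∂μ := by
  induction L generalizing G with
  | nil => rfl
  | cons k L ih =>
    show iteratedDirDeriv (L.map b) (fun p => fderiv ℝ (fun q => ∫ ζ, G q ζ ∂μ) p (b k)) = _
    simp only [h.fderiv_integral_apply]
    exact ih (h.fderiv_apply k)

end DominatedSmoothFamily

end DominatedSmoothFamily

section ProductCoordinates

variable {E E' F : Type*} [NormedAddCommGroup E] [NormedSpace ℝ E]
  [NormedAddCommGroup E'] [NormedSpace ℝ E'] [NormedAddCommGroup F] [NormedSpace ℝ F]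

theorem iteratedDirDeriv_comp_prodMk_left (L : List E) {h : E × E' → F} (hh : ContDiff ℝ ∞ h)
    (x : E) (y : E') :
    iteratedDirDeriv L (fun x' => h (x', y)) x
      = iteratedDirDeriv (L.map fun v => (v, 0)) h (x, y) := by
  induction L generalizing h with
  | nil => rfl
  | cons v L ih =>
    have hpartial : (fun x' => fderiv ℝ (fun x'' => h (x'', y)) x' v)
        = fun x' => fderiv ℝ h (x', y) (v, 0) := by
      funext x'
      have hcomp : HasFDerivAt (fun x'' => h (x'', y)) ((fderiv ℝ h _).comp (.inl ℝ E E')) x' :=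
        (hh.differentiable (by simp) _).hasFDerivAt.comp x' (hasFDerivAt_prodMk_left x' y)
      rw [hcomp.fderiv]
      rfl
    simp only [iteratedDirDeriv, List.map_cons, hpartial]
    exact ih (hh.fderiv_apply_const _)

theorem iteratedDirDeriv_comp_prodMk_right (L : List E') {h : E × E' → F} (hh : ContDiff ℝ ∞ h)
    (x : E) (y : E') :
    iteratedDirDeriv L (fun y' => h (x, y')) y
      = iteratedDirDeriv (L.map fun v => (0, v)) h (x, y) := by
  induction L generalizing h with
  | nil => rfl
  | cons v L ih =>
    have hpartial : (fun y' => fderiv ℝ (fun y'' => h (x, y'')) y' v)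
        = fun y' => fderiv ℝ h (x, y') (0, v) := by
      funext y'
      have hcomp : HasFDerivAt (fun y'' => h (x, y'')) ((fderiv ℝ h _).comp (.inr ℝ E E')) y' :=
        (hh.differentiable (by simp) _).hasFDerivAt.comp y' (hasFDerivAt_prodMk_right x y')
      rw [hcomp.fderiv]
      rfl
    simp only [iteratedDirDeriv, List.map_cons, hpartial]
    exact ih (hh.fderiv_apply_const _)

end ProductCoordinates

theorem integrable_exp_neg_mul_sq_norm {V : Type*} [NormedAddCommGroup V] [InnerProductSpace ℝ V]
    [FiniteDimensional ℝ V] [MeasurableSpace V] [BorelSpace V] {c : ℝ} (hc : 0 < c) :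
    Integrable fun v : V => exp (-c * ‖v‖ ^ 2) :=
  Integrable.of_integral_ne_zero
    (by rw [GaussianFourier.integral_rexp_neg_mul_sq_norm hc]; positivity)

section EuclideanCoordinates

variable {d : ℕ}

theorem pderivs_eq_iteratedDirDeriv (L : List (Fin d)) (f : Eu d → ℝ) :
    pderivs L f = iteratedDirDeriv (L.map fun i => EuclideanSpace.single i 1) f := by
  induction L generalizing f with
  | nil => rfl
  | cons i L ih => exact ih _

def prodBasis (d : ℕ) : Module.Basis (Fin d ⊕ Fin d) ℝ (Eu d × Eu d) :=
  (EuclideanSpace.basisFun (Fin d) ℝ).toBasis.prod (EuclideanSpace.basisFun (Fin d) ℝ).toBasis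

@[simp]
theorem prodBasis_inl (i : Fin d) : prodBasis d (.inl i) = (EuclideanSpace.single i 1, 0) := by
  simp [prodBasis, Module.Basis.prod_apply]

@[simp]
theorem prodBasis_inr (j : Fin d) : prodBasis d (.inr j) = (0, EuclideanSpace.single j 1) := by
  simp [prodBasis, Module.Basis.prod_apply]

/-- The coordinate directions of `∂_x^α ∂_y^β`, in the order in which `D2` differentiates. -/
def mToListSum (α β : Fin d → ℕ) : List (Fin d ⊕ Fin d) :=
  (mToList β).map .inr ++ (mToList α).map .inl

theorem D2_eq_iteratedDirDeriv (α β : Fin d → ℕ) {h : Eu d × Eu d → ℝ} (hh : ContDiff ℝ ∞ h)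
    (x y : Eu d) :
    D2 α β (fun x' y' => h (x', y')) x y
      = iteratedDirDeriv ((mToListSum α β).map (prodBasis d)) h (x, y) := by
  have hinner : (fun x' => pderivM β (fun y' => h (x', y')) y) = fun x' =>
      iteratedDirDeriv ((mToList β).map fun j => prodBasis d (.inr j)) h (x', y) := by
    funext x'
    simp only [pderivM, pderivs_eq_iteratedDirDeriv, iteratedDirDeriv_comp_prodMk_right _ hh,
      List.map_map, Function.comp_def, prodBasis_inr]
  rw [D2, hinner, pderivM, pderivs_eq_iteratedDirDeriv,
    iteratedDirDeriv_comp_prodMk_left _ (contDiff_iteratedDirDeriv _ hh), mToListSum,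
    List.map_append, iteratedDirDeriv_append]
  simp only [List.map_map, Function.comp_def, prodBasis_inl]

section MultiIndexLists

-- `Sum`'s derived `BEq` is not known to be lawful, so counting has to go through `DecidableEq`.
attribute [-instance] Sum.instBEq

theorem count_mToList (m : Fin d → ℕ) (i : Fin d) : (mToList m).count i = m i := by
  simp [mToList, List.count_flatMap, Function.comp_def, List.count_replicate, ← Fin.sum_univ_def]

theorem exists_perm_mToListSum (M : List (Fin d ⊕ Fin d)) :
    ∃ α β : Fin d → ℕ, M.Perm (mToListSum α β) := by
  refine ⟨fun i => M.count (.inl i), fun j => M.count (.inr j), List.perm_iff_count.mpr ?_⟩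
  rintro (i | j) <;>
    simp [mToListSum, List.count_map_of_injective _ _ Sum.inl_injective,
      List.count_map_of_injective _ _ Sum.inr_injective, count_mToList, List.count_eq_zero]

end MultiIndexLists

variable {Ω : Type*} [MeasurableSpace Ω] {μ : Measure Ω} {G : Eu d × Eu d → Ω → ℝ}

theorem dominatedSmoothFamily_of_D2_le (hG : ∀ ζ, ContDiff ℝ ∞ (G · ζ))
    (hGm : ∀ p, AEStronglyMeasurable (G p) μ)
    (hbound : ∀ α β : Fin d → ℕ, ∃ g : Ω → ℝ, Integrable g μ ∧
      ∀ x y ζ, |D2 α β (fun x' y' => G (x', y') ζ) x y| ≤ g ζ) :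
    DominatedSmoothFamily (prodBasis d) μ G := by
  refine ⟨hG, hGm, fun M => ?_⟩
  obtain ⟨α, β, hM⟩ := exists_perm_mToListSum M
  obtain ⟨g, hg, hgbound⟩ := hbound α β
  refine ⟨g, hg, fun p ζ => ?_⟩
  rw [(hM.map _).iteratedDirDeriv_eq (hG ζ), Real.norm_eq_abs,
    ← D2_eq_iteratedDirDeriv _ _ (hG ζ)]
  exact hgbound p.1 p.2 ζ

theorem DominatedSmoothFamily.D2_integral (h : DominatedSmoothFamily (prodBasis d) μ G)
    (α β : Fin d → ℕ) (x y : Eu d) :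
    D2 α β (fun x' y' => ∫ ζ, G (x', y') ζ ∂μ) x y
      = ∫ ζ, D2 α β (fun x' y' => G (x', y') ζ) x y ∂μ := by
  rw [D2_eq_iteratedDirDeriv α β h.contDiff_integral, h.iteratedDirDeriv_integral]
  simp only [D2_eq_iteratedDirDeriv α β (h.contDiff _)]

section GaussianWeight

variable {V : Type*} [NormedAddCommGroup V] [InnerProductSpace ℝ V] [FiniteDimensional ℝ V]
  [MeasurableSpace V] [BorelSpace V] {G : Eu d × Eu d → V → ℝ}

theorem dominatedSmoothFamily_of_D2_le_gaussian (hG : ∀ ζ, ContDiff ℝ ∞ (G · ζ))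
    (hGm : ∀ p, AEStronglyMeasurable (G p))
    (hbound : ∀ α β : Fin d → ℕ, ∃ A c : ℝ, 0 < c ∧
      ∀ x y ζ, |D2 α β (fun x' y' => G (x', y') ζ) x y| ≤ A * exp (-c * ‖ζ‖ ^ 2)) :
    DominatedSmoothFamily (prodBasis d) volume G :=
  dominatedSmoothFamily_of_D2_le hG hGm fun α β =>
    let ⟨A, _, hc, hAc⟩ := hbound α β
    ⟨_, (integrable_exp_neg_mul_sq_norm hc).const_mul A, hAc⟩

theorem abs_D2_integral_le_of_gaussian (h : DominatedSmoothFamily (prodBasis d) volume G)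
    (α β : Fin d → ℕ) (x y : Eu d) {A c : ℝ} (hc : 0 < c)
    (hbound : ∀ ζ, |D2 α β (fun x' y' => G (x', y') ζ) x y| ≤ A * exp (-c * ‖ζ‖ ^ 2)) :
    |D2 α β (fun x' y' => ∫ ζ, G (x', y') ζ) x y| ≤ A * ∫ ζ : V, exp (-c * ‖ζ‖ ^ 2) := by
  rw [h.D2_integral, ← integral_const_mul, ← Real.norm_eq_abs]
  exact norm_integral_le_of_norm_le ((integrable_exp_neg_mul_sq_norm hc).const_mul A)
    (.of_forall fun ζ => (Real.norm_eq_abs _).trans_le (hbound ζ))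

end GaussianWeight

end EuclideanCoordinates

theorem statement2_general (d : ℕ) (l : ℤ) (I : Type*)
    (χ : I → ℝ → ℝ → Eu d → Eu d → Eu d → ℝ)
    -- each `χ i` is measurable in all variables
    (hmeas : ∀ i, Measurable fun p : (ℝ × ℝ) × Eu d × Eu d × Eu d =>
      χ i p.1.1 p.1.2 p.2.1 p.2.2.1 p.2.2.2)
    -- (a) smoothness in `(x,y)`
    (hsm : ∀ i, ∀ s t : ℝ, 0 < s → s < t → t ≤ 1 → ∀ ζ : Eu d,
      ContDiff ℝ (⊤ : ℕ∞) fun p : Eu d × Eu d => χ i s t p.1 p.2 ζ)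
    -- (b) uniform Gaussian bounds
    (hb : ∀ α β : Fin d → ℕ, ∃ c₁ ≥ (0:ℝ), ∃ c₂ > (0:ℝ), ∀ i,
      ∀ s t : ℝ, 0 < s → s < t → t ≤ 1 → ∀ x y ζ : Eu d,
        |D2 α β (fun x' y' => χ i s t x' y' ζ) x y| ≤
          c₁ * t ^ (-(((mlen α + mlen β + d : ℕ) : ℝ) + (l : ℝ)) / 2) *
            Real.exp (-c₂ * ‖x - y‖ ^ 2 / t - c₂ * ‖ζ‖ ^ 2)) :
    -- conclusion: `{𝓘(χ_i) | i ∈ I}` is a bounded subset of `𝓗_l(ℝ^d)`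
    (∀ i, ∀ s t : ℝ, 0 < s → s < t → t ≤ 1 →
      ContDiff ℝ (⊤ : ℕ∞) fun p : Eu d × Eu d => ∫ ζ : Eu d, χ i s t p.1 p.2 ζ) ∧
    (∀ α β : Fin d → ℕ, ∃ C₁ ≥ (0:ℝ), ∃ C₂ > (0:ℝ), ∀ i,
      ∀ s t : ℝ, 0 < s → s < t → t ≤ 1 → ∀ x y : Eu d,
        |D2 α β (fun x' y' => ∫ ζ : Eu d, χ i s t x' y' ζ) x y| ≤
          C₁ * t ^ (-(((mlen α + mlen β + d : ℕ) : ℝ) + (l : ℝ)) / 2) *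
            Real.exp (-C₂ * ‖x - y‖ ^ 2 / t)) := by
  have hfam : ∀ i s t, 0 < s → s < t → t ≤ 1 →
      DominatedSmoothFamily (prodBasis d) volume fun p ζ => χ i s t p.1 p.2 ζ := by
    intro i s t hs hst ht
    refine dominatedSmoothFamily_of_D2_le_gaussian (hsm i s t hs hst ht)
      (fun p => ((hmeas i).comp (f := fun ζ => ((s, t), p.1, p.2, ζ))
        (by fun_prop)).aestronglyMeasurable) fun α β => ?_
    obtain ⟨c₁, hc₁, c₂, hc₂, hbound⟩ := hb α β
    refine ⟨c₁ * t ^ (-(((mlen α + mlen β + d : ℕ) : ℝ) + l) / 2), c₂, hc₂,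
      fun x y ζ => (hbound i s t hs hst ht x y ζ).trans ?_⟩
    have ht0 : 0 < t := hs.trans hst
    have hxy : -c₂ * ‖x - y‖ ^ 2 / t ≤ 0 :=
      div_nonpos_of_nonpos_of_nonneg (by nlinarith [sq_nonneg ‖x - y‖]) ht0.le
    gcongr
    linarith
  refine ⟨fun i s t hs hst ht => (hfam i s t hs hst ht).contDiff_integral, fun α β => ?_⟩
  obtain ⟨c₁, hc₁, c₂, hc₂, hbound⟩ := hb α β
  refine ⟨c₁ * ∫ ζ : Eu d, exp (-c₂ * ‖ζ‖ ^ 2), by positivity, c₂, hc₂,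
    fun i s t hs hst ht x y => ?_⟩
  calc _ ≤ c₁ * t ^ (-(((mlen α + mlen β + d : ℕ) : ℝ) + l) / 2) * exp (-c₂ * ‖x - y‖ ^ 2 / t)
        * ∫ ζ : Eu d, exp (-c₂ * ‖ζ‖ ^ 2) :=
      abs_D2_integral_le_of_gaussian (hfam i s t hs hst ht) α β x y hc₂ fun ζ =>
        (hbound i s t hs hst ht x y ζ).trans_eq (by rw [mul_assoc _ (exp _), ← exp_add]; ring_nf)
    _ = _ := by ring

/-- Lemma 15 of the paper: integrating out a uniformly Gaussian-dominated family of kernels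
in the auxiliary variable `ζ` produces a bounded subset of `𝓗_l(ℝ^d)`. -/
theorem statement2 (d : ℕ) (hd : 1 ≤ d) (l : ℤ) (I : Type*)
    (χ : I → ℝ → ℝ → Eu d → Eu d → Eu d → ℝ)
    -- each `χ i` is measurable in all variables
    (hmeas : ∀ i, Measurable fun p : (ℝ × ℝ) × Eu d × Eu d × Eu d =>
      χ i p.1.1 p.1.2 p.2.1 p.2.2.1 p.2.2.2)
    -- (a) smoothness in `(x,y)`
    (hsm : ∀ i, ∀ s t : ℝ, 0 < s → s < t → t ≤ 1 → ∀ ζ : Eu d,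
      ContDiff ℝ (⊤ : ℕ∞) fun p : Eu d × Eu d => χ i s t p.1 p.2 ζ)
    -- (b) uniform Gaussian bounds
    (hb : ∀ α β : Fin d → ℕ, ∃ c₁ ≥ (0:ℝ), ∃ c₂ > (0:ℝ), ∀ i,
      ∀ s t : ℝ, 0 < s → s < t → t ≤ 1 → ∀ x y ζ : Eu d,
        |D2 α β (fun x' y' => χ i s t x' y' ζ) x y| ≤
          c₁ * t ^ (-(((mlen α + mlen β + d : ℕ) : ℝ) + (l : ℝ)) / 2) *
            Real.exp (-c₂ * ‖x - y‖ ^ 2 / t - c₂ * ‖ζ‖ ^ 2)) :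
    -- conclusion: `{𝓘(χ_i) | i ∈ I}` is a bounded subset of `𝓗_l(ℝ^d)`
    (∀ i, ∀ s t : ℝ, 0 < s → s < t → t ≤ 1 →
      ContDiff ℝ (⊤ : ℕ∞) fun p : Eu d × Eu d => ∫ ζ : Eu d, χ i s t p.1 p.2 ζ) ∧
    (∀ α β : Fin d → ℕ, ∃ C₁ ≥ (0:ℝ), ∃ C₂ > (0:ℝ), ∀ i,
      ∀ s t : ℝ, 0 < s → s < t → t ≤ 1 → ∀ x y : Eu d,
        |D2 α β (fun x' y' => ∫ ζ : Eu d, χ i s t x' y' ζ) x y| ≤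
          C₁ * t ^ (-(((mlen α + mlen β + d : ℕ) : ℝ) + (l : ℝ)) / 2) *
            Real.exp (-C₂ * ‖x - y‖ ^ 2 / t)) :=
  statement2_general d l I χ hmeas hsm hb
end
end

section
/- Let d ≥ 1, l ∈ ℤ, q ∈ ℕ, and let B be a bounded subset of 𝒢_l(ℝ^d). Then for every π ∈ B, t ∈ (0,1] and x, y ∈ ℝ^d, the functions π(t,x,·) and π(t,·,y) belong to the Schwartz space 𝒮(ℝ^d), and there exists a constant c ≥ 0, depending only on B, d, l and q, such that for all π ∈ B, t ∈ (0,1] and x, y ∈ ℝ^d: N_q(π(t,x,·)) ≤ c t^{−(d+l+q)/2}(1+‖x‖^q) and N_q(π(t,·,y)) ≤ c t^{−(d+l+q)/2}(1+‖y‖^q). -/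
open MeasureTheory Real

noncomputable section

/-- `φ` belongs to the Schwartz space `𝒮(ℝ^d)`: it is infinitely differentiable and
`x ↦ x^α ∂^β φ(x)` is bounded for all multi-indices `α, β`. -/
def MemSchwartz {d : ℕ} (φ : Eu d → ℝ) : Prop :=
  ContDiff ℝ (⊤ : ℕ∞) φ ∧
    ∀ α β : Fin d → ℕ, ∃ C : ℝ, ∀ x : Eu d,
      |(∏ i, (x i) ^ (α i)) * pderivM β φ x| ≤ C

/-- The Schwartz seminorm `N_q(φ) = Σ_{|α|≤q, |β|≤q} sup_x |x^α ∂^β φ(x)|`. -/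
noncomputable def Nq (d q : ℕ) (φ : Eu d → ℝ) : ℝ :=
  ∑ α : Fin d → Fin (q + 1), ∑ β : Fin d → Fin (q + 1),
    if (∑ i, (α i : ℕ)) ≤ q ∧ (∑ i, (β i : ℕ)) ≤ q then
      ⨆ x : Eu d, |(∏ i, (x i) ^ ((α i : ℕ))) * pderivM (fun i => (β i : ℕ)) φ x|
    else 0

lemma mToList_zero {d : ℕ} : mToList (fun _ : Fin d => 0) = [] := by
  simp [mToList]

lemma pderivM_zero {d : ℕ} (f : Eu d → ℝ) : pderivM (fun _ : Fin d => 0) f = f := by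
  rw [pderivM, mToList_zero]; rfl

lemma mlen_zero {d : ℕ} : mlen (fun _ : Fin d => 0) = 0 := by simp [mlen]

lemma D2_zero_left {d : ℕ} (β : Fin d → ℕ) (f : Eu d → Eu d → ℝ) (x y : Eu d) :
    D2 (fun _ => 0) β f x y = pderivM β (f x) y := by
  rw [D2, pderivM_zero]

lemma D2_zero_right {d : ℕ} (α : Fin d → ℕ) (f : Eu d → Eu d → ℝ) (x y : Eu d) :
    D2 α (fun _ => 0) f x y = pderivM α (fun x' => f x' y) x := by
  rw [D2]; simp only [pderivM_zero]

lemma abs_coord_le {d : ℕ} (y : Eu d) (i : Fin d) : |y i| ≤ ‖y‖ := by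
  rw [EuclideanSpace.norm_eq, ← Real.sqrt_sq (abs_nonneg (y i))]
  apply Real.sqrt_le_sqrt
  have := Finset.single_le_sum (f := fun j => ‖y j‖ ^ 2) (fun j _ => by positivity)
    (Finset.mem_univ i)
  simpa using this

lemma prod_abs_pow_le {d : ℕ} (y : Eu d) (m : Fin d → ℕ) :
    ∏ i, |y i| ^ (m i) ≤ ‖y‖ ^ (mlen m) := by
  rw [mlen, ← Finset.prod_pow_eq_pow_sum]
  exact Finset.prod_le_prod (fun i _ => by positivity)
    (fun i _ => pow_le_pow_left₀ (abs_nonneg _) (abs_coord_le y i) _)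

lemma pow_div_fact_le_exp {x : ℝ} (hx : 0 ≤ x) (k : ℕ) :
    x ^ k / k.factorial ≤ Real.exp x := by
  refine le_trans ?_ (Real.sum_le_exp_of_nonneg hx (k+1))
  exact Finset.single_le_sum (f := fun i => x ^ i / i.factorial)
    (fun i _ => by positivity) (Finset.self_mem_range_succ k)

lemma gauss_sup (c : ℝ) (hc : 0 < c) (k : ℕ) :
    ∃ M ≥ (0:ℝ), ∀ u : ℝ, 0 ≤ u → u ^ k * Real.exp (-(c * u ^ 2)) ≤ M := by
  refine ⟨max 1 ((k.factorial : ℝ) / c ^ k), le_trans zero_le_one (le_max_left _ _), ?_⟩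
  intro u hu
  rcases le_total u 1 with h1 | h1
  · refine le_trans ?_ (le_max_left _ _)
    have h2 : Real.exp (-(c * u ^ 2)) ≤ 1 := Real.exp_le_one_iff.mpr (by nlinarith)
    calc u ^ k * Real.exp (-(c * u ^ 2)) ≤ 1 * 1 :=
          mul_le_mul (pow_le_one₀ hu h1) h2 (Real.exp_nonneg _) zero_le_one
      _ ≤ _ := by norm_num
  · refine le_trans ?_ (le_max_right _ _)
    have hu0 : 0 < u := lt_of_lt_of_le one_pos h1
    have hU : (1:ℝ) ≤ u ^ k := one_le_pow₀ h1
    have hs : 0 < c * u ^ 2 := by positivity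
    have h3 : (c * u ^ 2) ^ k ≤ (k.factorial : ℝ) * Real.exp (c * u ^ 2) := by
      have := pow_div_fact_le_exp hs.le k
      rw [div_le_iff₀ (by positivity)] at this
      linarith [this]
    have hkey : Real.exp (-(c * u ^ 2)) ≤ (k.factorial : ℝ) / (c * u ^ 2) ^ k := by
      rw [Real.exp_neg, inv_eq_one_div, div_le_div_iff₀ (Real.exp_pos _) (by positivity)]
      linarith
    have heq : u ^ k * ((k.factorial:ℝ) / (c * u ^ 2) ^ k)
        = (k.factorial:ℝ) / (c ^ k * u ^ k) := by
      rw [mul_pow, eq_div_iff (by positivity)]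
      field_simp
      ring
    calc u ^ k * Real.exp (-(c * u ^ 2))
        ≤ u ^ k * ((k.factorial:ℝ) / (c * u ^ 2) ^ k) :=
          mul_le_mul_of_nonneg_left hkey (by positivity)
      _ = (k.factorial:ℝ) / (c ^ k * u ^ k) := heq
      _ ≤ (k.factorial:ℝ) / c ^ k := by
          apply div_le_div_of_nonneg_left (by positivity) (by positivity)
          nlinarith [pow_pos hc k]

lemma pow_le_one_add_pow {s : ℝ} (hs : 0 ≤ s) {a q : ℕ} (h : a ≤ q) : s ^ a ≤ 1 + s ^ q := by
  rcases le_total s 1 with h1 | h1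
  · have h2 : s ^ a ≤ 1 := pow_le_one₀ hs h1
    have : (0:ℝ) ≤ s ^ q := by positivity
    linarith
  · have h2 : s ^ a ≤ s ^ q := pow_le_pow_right₀ h1 h
    linarith

lemma term_bound {d : ℕ} (c₁ c₂ : ℝ) (hc₁ : 0 ≤ c₁) (hc₂ : 0 < c₂) (a q : ℕ) (ha : a ≤ q)
    (e e₀ : ℝ) (he : e₀ ≤ e) :
    ∃ C ≥ (0:ℝ), ∀ t ∈ Set.Ioc (0:ℝ) 1, ∀ (x : Eu d) (g : Eu d → ℝ),
      (∀ z, |g z| ≤ c₁ * t ^ e * Real.exp (-c₂ * ‖x - z‖ ^ 2 / t)) →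
      ∀ z, ‖z‖ ^ a * |g z| ≤ C * t ^ e₀ * (1 + ‖x‖ ^ q) := by
  obtain ⟨M, hM0, hM⟩ := gauss_sup c₂ hc₂ a
  refine ⟨2 ^ a * c₁ * (1 + M), by positivity, ?_⟩
  rintro t ⟨ht0, ht1⟩ x g hg z
  set s := ‖x‖ with hsdef
  set u := ‖x - z‖ with hudef
  have hu0 : 0 ≤ u := norm_nonneg _
  have hs0 : 0 ≤ s := norm_nonneg _
  have hT0 : (0:ℝ) < t ^ e := Real.rpow_pos_of_pos ht0 _
  have hT0' : (0:ℝ) < t ^ e₀ := Real.rpow_pos_of_pos ht0 _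
  have hTle : t ^ e ≤ t ^ e₀ := Real.rpow_le_rpow_of_exponent_ge ht0 ht1 he
  have hEarg : -c₂ * u ^ 2 / t ≤ -(c₂ * u ^ 2) := by
    rw [neg_mul, neg_div, neg_le_neg_iff, le_div_iff₀ ht0]
    nlinarith [mul_le_mul_of_nonneg_left ht1 (mul_nonneg hc₂.le (sq_nonneg u))]
  have hE1 : Real.exp (-c₂ * u ^ 2 / t) ≤ Real.exp (-(c₂ * u ^ 2)) := Real.exp_le_exp.2 hEarg
  have hE2 : Real.exp (-(c₂ * u ^ 2)) ≤ 1 := Real.exp_le_one_iff.mpr (by nlinarith)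
  have hya : ‖z‖ ^ a ≤ 2 ^ a * (s ^ a + u ^ a) := by
    have htri : ‖z‖ ≤ s + u := by
      calc ‖z‖ = ‖x - (x - z)‖ := by rw [sub_sub_cancel]
        _ ≤ s + u := norm_sub_le _ _
    calc ‖z‖ ^ a ≤ (s + u) ^ a := pow_le_pow_left₀ (norm_nonneg _) htri a
      _ ≤ 2 ^ (a - 1) * (s ^ a + u ^ a) := add_pow_le hs0 hu0 a
      _ ≤ 2 ^ a * (s ^ a + u ^ a) := by
          apply mul_le_mul_of_nonneg_right
            (pow_le_pow_right₀ one_le_two (Nat.sub_le a 1)) (by positivity)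
  have hbound := hg z
  have hsa : s ^ a ≤ 1 + s ^ q := pow_le_one_add_pow hs0 ha
  have huM : u ^ a * Real.exp (-(c₂ * u ^ 2)) ≤ M := hM u hu0
  calc ‖z‖ ^ a * |g z|
      ≤ (2 ^ a * (s ^ a + u ^ a)) * (c₁ * t ^ e * Real.exp (-c₂ * u ^ 2 / t)) :=
        mul_le_mul hya hbound (abs_nonneg _) (by positivity)
    _ = 2 ^ a * c₁ * t ^ e *
        (s ^ a * Real.exp (-c₂ * u ^ 2 / t) + u ^ a * Real.exp (-c₂ * u ^ 2 / t)) := by ring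
    _ ≤ 2 ^ a * c₁ * t ^ e * ((1 + s ^ q) + M) := by
        apply mul_le_mul_of_nonneg_left _ (by positivity)
        have e1 : s ^ a * Real.exp (-c₂ * u ^ 2 / t) ≤ (1 + s ^ q) * 1 :=
          mul_le_mul hsa (le_trans hE1 hE2) (Real.exp_nonneg _) (by positivity)
        have e2 : u ^ a * Real.exp (-c₂ * u ^ 2 / t) ≤ M :=
          le_trans (mul_le_mul_of_nonneg_left hE1 (by positivity)) huM
        linarith
    _ ≤ 2 ^ a * c₁ * t ^ e₀ * ((1 + M) * (1 + s ^ q)) := by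
        have h1 : (1 + s ^ q) + M ≤ (1 + M) * (1 + s ^ q) := by nlinarith [pow_nonneg hs0 q]
        have h2 : (0:ℝ) ≤ (1 + s ^ q) + M := by positivity
        calc 2 ^ a * c₁ * t ^ e * ((1 + s ^ q) + M)
            ≤ 2 ^ a * c₁ * t ^ e₀ * ((1 + s ^ q) + M) := by
              apply mul_le_mul_of_nonneg_right _ h2
              apply mul_le_mul_of_nonneg_left hTle (by positivity)
          _ ≤ 2 ^ a * c₁ * t ^ e₀ * ((1 + M) * (1 + s ^ q)) :=
              mul_le_mul_of_nonneg_left h1 (by positivity)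
    _ = 2 ^ a * c₁ * (1 + M) * t ^ e₀ * (1 + s ^ q) := by ring

lemma slice_bound {d : ℕ} (l : ℤ) (B : Set (ℝ → Eu d → Eu d → ℝ))
    (hG : ∀ α β : Fin d → ℕ, ∃ c₁ ≥ (0:ℝ), ∃ c₂ > (0:ℝ), ∀ P ∈ B,
      ∀ t ∈ Set.Ioc (0:ℝ) 1, ∀ x y : Eu d,
        |D2 α β (P t) x y| ≤
          c₁ * t ^ (-(((mlen α + mlen β + d : ℕ) : ℝ) + (l : ℝ)) / 2) *
            Real.exp (-c₂ * ‖x - y‖ ^ 2 / t))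
    (q : ℕ) (α β : Fin d → ℕ) (hα : mlen α ≤ q) (hβ : mlen β ≤ q) :
    ∃ C ≥ (0:ℝ), ∀ P ∈ B, ∀ t ∈ Set.Ioc (0:ℝ) 1, ∀ x y z : Eu d,
      (∏ i, |z i| ^ α i) * |pderivM β (fun w => P t x w) z| ≤
        C * t ^ (-(((d + q : ℕ) : ℝ) + (l : ℝ)) / 2) * (1 + ‖x‖ ^ q) ∧
      (∏ i, |z i| ^ α i) * |pderivM β (fun w => P t w y) z| ≤
        C * t ^ (-(((d + q : ℕ) : ℝ) + (l : ℝ)) / 2) * (1 + ‖y‖ ^ q) := by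
  obtain ⟨c₁, hc₁, c₂, hc₂, h1⟩ := hG (fun _ => 0) β
  obtain ⟨c₁', hc₁', c₂', hc₂', h2⟩ := hG β (fun _ => 0)
  set cmax := max c₁ c₁' with hcmax
  set cmin := min c₂ c₂' with hcmin
  have hcmax0 : 0 ≤ cmax := le_trans hc₁ (le_max_left _ _)
  have hcmin0 : 0 < cmin := lt_min hc₂ hc₂'
  set e : ℝ := -(((mlen β + d : ℕ) : ℝ) + (l : ℝ)) / 2 with he_def
  set e₀ : ℝ := -(((d + q : ℕ) : ℝ) + (l : ℝ)) / 2 with he₀_def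
  have he : e₀ ≤ e := by
    rw [he_def, he₀_def]
    have : ((mlen β : ℝ)) ≤ (q : ℝ) := Nat.cast_le.mpr hβ
    push_cast
    linarith
  obtain ⟨C, hC0, hC⟩ := term_bound (d := d) cmax cmin hcmax0 hcmin0 (mlen α) q hα e e₀ he
  refine ⟨C, hC0, ?_⟩
  intro P hP t ht x y z
  have htpos : (0:ℝ) < t := ht.1
  have hT0 : (0:ℝ) < t ^ e := Real.rpow_pos_of_pos htpos _
  constructor
  · have hg : ∀ w, |D2 (fun _ => 0) β (P t) x w| ≤
        cmax * t ^ e * Real.exp (-cmin * ‖x - w‖ ^ 2 / t) := by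
      intro w
      refine le_trans (h1 P hP t ht x w) ?_
      have hE : (-(((mlen (fun _ : Fin d => 0) + mlen β + d : ℕ) : ℝ) + (l : ℝ)) / 2) = e := by
        rw [he_def, mlen_zero, Nat.zero_add]
      rw [hE]
      have hdiv : -c₂ * ‖x - w‖ ^ 2 / t ≤ -cmin * ‖x - w‖ ^ 2 / t := by
        apply div_le_div_of_nonneg_right ?_ htpos.le
        nlinarith [sq_nonneg ‖x - w‖, min_le_left c₂ c₂']
      exact mul_le_mul (mul_le_mul_of_nonneg_right (le_max_left _ _) hT0.le)
        (Real.exp_le_exp.2 hdiv) (Real.exp_nonneg _) (by positivity)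
    have key := hC t ht x (fun w => D2 (fun _ => 0) β (P t) x w) hg z
    have hrw : pderivM β (fun w => P t x w) z = D2 (fun _ => 0) β (P t) x z :=
      (D2_zero_left β (P t) x z).symm
    rw [hrw]
    refine le_trans (mul_le_mul_of_nonneg_right (prod_abs_pow_le z α) (abs_nonneg _)) key
  · have hg : ∀ w, |D2 β (fun _ => 0) (P t) w y| ≤
        cmax * t ^ e * Real.exp (-cmin * ‖y - w‖ ^ 2 / t) := by
      intro w
      refine le_trans (h2 P hP t ht w y) ?_
      have hE : (-(((mlen β + mlen (fun _ : Fin d => 0) + d : ℕ) : ℝ) + (l : ℝ)) / 2) = e := by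
        rw [he_def, mlen_zero, Nat.add_zero]
      rw [hE, norm_sub_rev w y]
      have hdiv : -c₂' * ‖y - w‖ ^ 2 / t ≤ -cmin * ‖y - w‖ ^ 2 / t := by
        apply div_le_div_of_nonneg_right ?_ htpos.le
        nlinarith [sq_nonneg ‖y - w‖, min_le_right c₂ c₂']
      exact mul_le_mul (mul_le_mul_of_nonneg_right (le_max_right _ _) hT0.le)
        (Real.exp_le_exp.2 hdiv) (Real.exp_nonneg _) (by positivity)
    have key := hC t ht y (fun w => D2 β (fun _ => 0) (P t) w y) hg z
    have hrw : pderivM β (fun w => P t w y) z = D2 β (fun _ => 0) (P t) z y :=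
      (D2_zero_right β (P t) z y).symm
    rw [hrw]
    refine le_trans (mul_le_mul_of_nonneg_right (prod_abs_pow_le z α) (abs_nonneg _)) key

/-- If `B` is a bounded subset of `𝒢_l(ℝ^d)` then its members are Schwartz functions in each
space variable, with Schwartz seminorms `N_q(π(t,x,·)) ≤ c t^{-(d+l+q)/2}(1+‖x‖^q)` and
`N_q(π(t,·,y)) ≤ c t^{-(d+l+q)/2}(1+‖y‖^q)` uniformly over `B`. -/
theorem statement3 (d : ℕ) (hd : 1 ≤ d) (l : ℤ) (q : ℕ)
    (B : Set (ℝ → Eu d → Eu d → ℝ))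
    (hmeas : ∀ P ∈ B, Measurable fun p : ℝ × Eu d × Eu d => P p.1 p.2.1 p.2.2)
    (hsmooth : ∀ P ∈ B, ∀ t ∈ Set.Ioc (0:ℝ) 1,
      ContDiff ℝ (⊤ : ℕ∞) fun p : Eu d × Eu d => P t p.1 p.2)
    -- `B` is a bounded subset of `𝒢_l(ℝ^d)`
    (hG : ∀ α β : Fin d → ℕ, ∃ c₁ ≥ (0:ℝ), ∃ c₂ > (0:ℝ), ∀ P ∈ B,
      ∀ t ∈ Set.Ioc (0:ℝ) 1, ∀ x y : Eu d,
        |D2 α β (P t) x y| ≤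
          c₁ * t ^ (-(((mlen α + mlen β + d : ℕ) : ℝ) + (l : ℝ)) / 2) *
            Real.exp (-c₂ * ‖x - y‖ ^ 2 / t)) :
    -- each slice is a Schwartz function
    (∀ P ∈ B, ∀ t ∈ Set.Ioc (0:ℝ) 1, ∀ x y : Eu d,
      MemSchwartz (fun z => P t x z) ∧ MemSchwartz (fun z => P t z y)) ∧
    -- with uniform seminorm estimates
    (∃ c ≥ (0:ℝ), ∀ P ∈ B, ∀ t ∈ Set.Ioc (0:ℝ) 1, ∀ x y : Eu d,
      Nq d q (fun z => P t x z) ≤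
        c * t ^ (-(((d + q : ℕ) : ℝ) + (l : ℝ)) / 2) * (1 + ‖x‖ ^ q) ∧
      Nq d q (fun z => P t z y) ≤
        c * t ^ (-(((d + q : ℕ) : ℝ) + (l : ℝ)) / 2) * (1 + ‖y‖ ^ q)) := by
  constructor
  · -- Schwartz membership
    intro P hP t ht x y
    have habs : ∀ (φ : Eu d → ℝ) (α β : Fin d → ℕ) (z : Eu d),
        |(∏ i, (z i) ^ (α i)) * pderivM β φ z| =
          (∏ i, |z i| ^ α i) * |pderivM β φ z| := by
      intro φ α β z
      rw [abs_mul, Finset.abs_prod]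
      simp_rw [abs_pow]
    refine ⟨⟨(hsmooth P hP t ht).comp (contDiff_const.prodMk contDiff_id), ?_⟩,
           ⟨(hsmooth P hP t ht).comp (contDiff_id.prodMk contDiff_const), ?_⟩⟩
    · intro α β
      obtain ⟨C, hC0, hC⟩ := slice_bound l B hG (mlen α + mlen β) α β
        (Nat.le_add_right _ _) (Nat.le_add_left _ _)
      refine ⟨C * t ^ (-(((d + (mlen α + mlen β) : ℕ) : ℝ) + (l : ℝ)) / 2) *
        (1 + ‖x‖ ^ (mlen α + mlen β)), fun z => ?_⟩
      rw [habs]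
      exact (hC P hP t ht x y z).1
    · intro α β
      obtain ⟨C, hC0, hC⟩ := slice_bound l B hG (mlen α + mlen β) α β
        (Nat.le_add_right _ _) (Nat.le_add_left _ _)
      refine ⟨C * t ^ (-(((d + (mlen α + mlen β) : ℕ) : ℝ) + (l : ℝ)) / 2) *
        (1 + ‖y‖ ^ (mlen α + mlen β)), fun z => ?_⟩
      rw [habs]
      exact (hC P hP t ht x y z).2
  · -- seminorm estimates
    set e₀ : ℝ := -(((d + q : ℕ) : ℝ) + (l : ℝ)) / 2 with he₀
    have key : ∀ p : (Fin d → Fin (q+1)) × (Fin d → Fin (q+1)),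
        ∃ C ≥ (0:ℝ), ∀ P ∈ B, ∀ t ∈ Set.Ioc (0:ℝ) 1, ∀ x y : Eu d,
        (if (∑ i, ((p.1 i : ℕ))) ≤ q ∧ (∑ i, ((p.2 i : ℕ))) ≤ q then
            ⨆ z : Eu d, |(∏ i, (z i) ^ ((p.1 i : ℕ))) *
              pderivM (fun i => (p.2 i : ℕ)) (fun w => P t x w) z|
          else 0) ≤ C * t ^ e₀ * (1 + ‖x‖ ^ q) ∧
        (if (∑ i, ((p.1 i : ℕ))) ≤ q ∧ (∑ i, ((p.2 i : ℕ))) ≤ q then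
            ⨆ z : Eu d, |(∏ i, (z i) ^ ((p.1 i : ℕ))) *
              pderivM (fun i => (p.2 i : ℕ)) (fun w => P t w y) z|
          else 0) ≤ C * t ^ e₀ * (1 + ‖y‖ ^ q) := by
      intro p
      by_cases hcond : (∑ i, ((p.1 i : ℕ))) ≤ q ∧ (∑ i, ((p.2 i : ℕ))) ≤ q
      · obtain ⟨C, hC0, hC⟩ := slice_bound l B hG q (fun i => (p.1 i : ℕ))
          (fun i => (p.2 i : ℕ)) hcond.1 hcond.2
        refine ⟨C, hC0, fun P hP t ht x y => ?_⟩
        have hT : (0:ℝ) < t ^ e₀ := Real.rpow_pos_of_pos ht.1 _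
        rw [if_pos hcond, if_pos hcond]
        constructor
        · refine Real.iSup_le (fun z => ?_) (by positivity)
          rw [abs_mul, Finset.abs_prod]
          simp_rw [abs_pow]
          exact (hC P hP t ht x y z).1
        · refine Real.iSup_le (fun z => ?_) (by positivity)
          rw [abs_mul, Finset.abs_prod]
          simp_rw [abs_pow]
          exact (hC P hP t ht x y z).2
      · refine ⟨0, le_refl _, fun P hP t ht x y => ?_⟩
        rw [if_neg hcond, if_neg hcond]
        norm_num
    choose Cf hCf0 hCf using key
    refine ⟨∑ p, Cf p, Finset.sum_nonneg (fun p _ => hCf0 p), ?_⟩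
    intro P hP t ht x y
    have hsum : ∀ (A : ℝ),
        ∑ α : Fin d → Fin (q+1), ∑ β : Fin d → Fin (q+1), Cf (α, β) * A
          = (∑ p, Cf p) * A := by
      intro A
      rw [Fintype.sum_prod_type]
      simp only [Finset.sum_mul]
    constructor
    · calc Nq d q (fun z => P t x z)
          ≤ ∑ α : Fin d → Fin (q+1), ∑ β : Fin d → Fin (q+1),
              Cf (α, β) * (t ^ e₀ * (1 + ‖x‖ ^ q)) := by
            rw [Nq]
            refine Finset.sum_le_sum (fun α _ => Finset.sum_le_sum (fun β _ => ?_))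
            have := (hCf (α, β) P hP t ht x y).1
            rw [mul_assoc] at this
            exact this
        _ = (∑ p, Cf p) * (t ^ e₀ * (1 + ‖x‖ ^ q)) := hsum _
        _ = (∑ p, Cf p) * t ^ e₀ * (1 + ‖x‖ ^ q) := by ring
    · calc Nq d q (fun z => P t z y)
          ≤ ∑ α : Fin d → Fin (q+1), ∑ β : Fin d → Fin (q+1),
              Cf (α, β) * (t ^ e₀ * (1 + ‖y‖ ^ q)) := by
            rw [Nq]
            refine Finset.sum_le_sum (fun α _ => Finset.sum_le_sum (fun β _ => ?_))
            have := (hCf (α, β) P hP t ht x y).2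
            rw [mul_assoc] at this
            exact this
        _ = (∑ p, Cf p) * (t ^ e₀ * (1 + ‖y‖ ^ q)) := hsum _
        _ = (∑ p, Cf p) * t ^ e₀ * (1 + ‖y‖ ^ q) := by ring
end
end

section
/- Let d ≥ 1, l ∈ ℤ, μ ∈ (0,2), and let c₁, c₂, c₃ ≥ 0 and c₄ > 0. Then there exist C₁ ≥ 0 and C₂ ≥ 0 such that for every measurable function f : ℝ^d → ℝ with |f(y)| ≤ c₁ exp(c₂‖y‖^μ) for all y, and every measurable function π : (0,1] × ℝ^d × ℝ^d → ℝ with |π(t,x,y)| ≤ c₃ t^{−(d+l)/2} exp(−c₄‖x−y‖²/t) for all t ∈ (0,1] and x, y ∈ ℝ^d, the integral ∫_{ℝ^d} f(y) π(t,x,y) dy converges absolutely and satisfies |∫_{ℝ^d} f(y) π(t,x,y) dy| ≤ C₁ t^{−l/2} exp(C₂‖x‖^μ) for all t ∈ (0,1] and x ∈ ℝ^d. -/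
/-!
Since `μ < 2`, the triangle inequality and a Young-type inequality give
`c₂‖y‖^μ ≤ K + c₂2^μ‖x‖^μ + (c₄/2)‖x - y‖²`, so for `t ≤ 1` half of the Gaussian factor
`exp(-c₄‖x - y‖²/t)` absorbs the growth of `f`. What remains is dominated by the Gaussian
`exp(-(c₄/2t)‖y - x‖²)`, whose integral `(2πt/c₄)^{d/2}` cancels the factor `t^{-d/2}` of the
kernel.
-/

open MeasureTheory Real

noncomputable section

lemma add_rpow_le_two_rpow_mul_rpow_add_rpow {μ a b : ℝ} (hμ : 0 ≤ μ) (ha : 0 ≤ a) (hb : 0 ≤ b) :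
    (a + b) ^ μ ≤ 2 ^ μ * (a ^ μ + b ^ μ) := by
  have hmax : (max a b) ^ μ ≤ a ^ μ + b ^ μ := by
    rcases le_total a b with h | h
    · simpa [max_eq_right h] using rpow_nonneg ha μ
    · simpa [max_eq_left h] using rpow_nonneg hb μ
  calc (a + b) ^ μ ≤ (2 * max a b) ^ μ := by
        gcongr
        linarith [le_max_left a b, le_max_right a b]
    _ = 2 ^ μ * (max a b) ^ μ := mul_rpow zero_le_two (ha.trans (le_max_left a b))
    _ ≤ 2 ^ μ * (a ^ μ + b ^ μ) := by gcongr

lemma exists_mul_rpow_le_mul_sq_add {μ : ℝ} (hμ0 : 0 ≤ μ) (hμ2 : μ < 2) {A ε : ℝ} (hA : 0 ≤ A)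
    (hε : 0 < ε) : ∃ K, ∀ r : ℝ, 0 ≤ r → A * r ^ μ ≤ ε * r ^ 2 + K := by
  set R := (A / ε) ^ (2 - μ)⁻¹
  have hR : 0 ≤ R := by positivity
  have hRpow : R ^ (2 - μ) = A / ε := rpow_inv_rpow (by positivity) (by linarith)
  refine ⟨A * R ^ μ, fun r hr => ?_⟩
  rcases le_total r R with h | h
  · have : A * r ^ μ ≤ A * R ^ μ := by gcongr
    linarith [mul_nonneg hε.le (sq_nonneg r)]
  · have hA_le : A ≤ ε * r ^ (2 - μ) := by
      rw [← div_le_iff₀' hε, ← hRpow]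
      exact rpow_le_rpow hR h (by linarith)
    have hsplit : r ^ (2 - μ) * r ^ μ = r ^ 2 := by
      rw [← rpow_add' hr (by norm_num), sub_add_cancel, rpow_two]
    calc A * r ^ μ ≤ ε * r ^ (2 - μ) * r ^ μ := by gcongr
      _ = ε * r ^ 2 := by rw [mul_assoc, hsplit]
      _ ≤ ε * r ^ 2 + A * R ^ μ := le_add_of_nonneg_right (by positivity)

lemma exists_exp_rpow_mul_exp_gaussian_le {E : Type*} [SeminormedAddCommGroup E] {μ c₂ c₄ : ℝ}
    (hμ0 : 0 ≤ μ) (hμ2 : μ < 2) (hc₂ : 0 ≤ c₂) (hc₄ : 0 < c₄) :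
    ∃ K, ∀ t ∈ Set.Ioc (0 : ℝ) 1, ∀ x y : E,
      rexp (c₂ * ‖y‖ ^ μ) * rexp (-c₄ * ‖x - y‖ ^ 2 / t) ≤
        rexp K * rexp (c₂ * 2 ^ μ * ‖x‖ ^ μ) * rexp (-(c₄ / (2 * t)) * ‖y - x‖ ^ 2) := by
  obtain ⟨K, hK⟩ := exists_mul_rpow_le_mul_sq_add hμ0 hμ2 (A := c₂ * 2 ^ μ) (by positivity)
    (half_pos hc₄)
  refine ⟨K, fun t ⟨ht0, ht1⟩ x y => ?_⟩
  simp only [← exp_add, exp_le_exp]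
  rw [norm_sub_rev y x]
  set r := ‖x - y‖
  have hr : 0 ≤ r := norm_nonneg _
  have hy : ‖y‖ ^ μ ≤ 2 ^ μ * (‖x‖ ^ μ + r ^ μ) := by
    calc ‖y‖ ^ μ ≤ (‖x‖ + r) ^ μ := by
          gcongr
          simpa [norm_sub_rev] using norm_le_norm_add_norm_sub' y x
      _ ≤ 2 ^ μ * (‖x‖ ^ μ + r ^ μ) := add_rpow_le_two_rpow_mul_rpow_add_rpow hμ0 (norm_nonneg x) hr
  have ht : c₄ / 2 * r ^ 2 ≤ c₄ / 2 * r ^ 2 / t := le_div_self (by positivity) ht0 ht1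
  have hsplit : -c₄ * r ^ 2 / t = -(c₄ / 2 * r ^ 2 / t) - c₄ / (2 * t) * r ^ 2 := by
    field_simp; ring
  have hgrowth : c₂ * ‖y‖ ^ μ ≤ c₂ * 2 ^ μ * ‖x‖ ^ μ + c₂ * 2 ^ μ * r ^ μ := by
    linear_combination mul_le_mul_of_nonneg_left hy hc₂
  linarith [hK r hr]

section Gaussian

variable {V : Type*} [NormedAddCommGroup V] [InnerProductSpace ℝ V] [FiniteDimensional ℝ V]
  [MeasurableSpace V] [BorelSpace V]

lemma integrable_rexp_neg_mul_sq_norm {b : ℝ} (hb : 0 < b) :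
    Integrable (fun v : V => rexp (-b * ‖v‖ ^ 2)) :=
  .of_integral_ne_zero (by rw [GaussianFourier.integral_rexp_neg_mul_sq_norm hb]; positivity)

lemma integrable_and_abs_integral_le_of_abs_le_gaussian {g : V → ℝ}
    (hg : AEStronglyMeasurable g) {M b : ℝ} (hb : 0 < b) (x : V)
    (hbound : ∀ y, |g y| ≤ M * rexp (-b * ‖y - x‖ ^ 2)) :
    Integrable g ∧ |∫ y, g y| ≤ M * (π / b) ^ (Module.finrank ℝ V / 2 : ℝ) := by
  have hG : Integrable (fun y => M * rexp (-b * ‖y - x‖ ^ 2)) :=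
    ((integrable_rexp_neg_mul_sq_norm hb).comp_sub_right x).const_mul M
  refine ⟨hG.mono' hg (ae_of_all _ fun y => (norm_eq_abs _).trans_le (hbound y)), ?_⟩
  calc |∫ y, g y| ≤ ∫ y, M * rexp (-b * ‖y - x‖ ^ 2) :=
        norm_integral_le_of_norm_le hG (ae_of_all _ fun y => (norm_eq_abs _).trans_le (hbound y))
    _ = M * (π / b) ^ (Module.finrank ℝ V / 2 : ℝ) := by
        rw [integral_const_mul, integral_sub_right_eq_self (fun v => rexp (-b * ‖v‖ ^ 2)) x,
          GaussianFourier.integral_rexp_neg_mul_sq_norm hb]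

end Gaussian

lemma rpow_neg_add_div_two_mul_rpow_pi_div {c t : ℝ} (hc : 0 < c) (ht : 0 < t) (d l : ℝ) :
    t ^ (-(d + l) / 2) * (π / (c / (2 * t))) ^ (d / 2) = (2 * π / c) ^ (d / 2) * t ^ (-l / 2) := by
  rw [show π / (c / (2 * t)) = 2 * π / c * t by field_simp, mul_rpow (by positivity) ht.le,
    mul_left_comm, ← rpow_add ht]
  ring_nf

theorem statement6_general (d : ℕ) (l : ℤ) (μ : ℝ) (hμ0 : 0 < μ) (hμ2 : μ < 2)
    (c₁ : ℝ) (hc₁ : 0 ≤ c₁) (c₂ : ℝ) (hc₂ : 0 ≤ c₂) (c₃ : ℝ) (hc₃ : 0 ≤ c₃)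
    (c₄ : ℝ) (hc₄ : 0 < c₄) :
    ∃ C₁ ≥ (0:ℝ), ∃ C₂ ≥ (0:ℝ), ∀ f : Eu d → ℝ, Measurable f →
      (∀ y : Eu d, |f y| ≤ c₁ * Real.exp (c₂ * ‖y‖ ^ μ)) →
      ∀ P : ℝ → Eu d → Eu d → ℝ,
        (∀ t ∈ Set.Ioc (0:ℝ) 1, ∀ x : Eu d, Measurable (P t x)) →
        (∀ t ∈ Set.Ioc (0:ℝ) 1, ∀ x y : Eu d,
          |P t x y| ≤ c₃ * t ^ (-((d : ℝ) + (l : ℝ)) / 2) * Real.exp (-c₄ * ‖x - y‖ ^ 2 / t)) →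
        ∀ t ∈ Set.Ioc (0:ℝ) 1, ∀ x : Eu d,
          Integrable (fun y => f y * P t x y) ∧
          |∫ y : Eu d, f y * P t x y| ≤ C₁ * t ^ (-(l : ℝ) / 2) * Real.exp (C₂ * ‖x‖ ^ μ) := by
  obtain ⟨K, hK⟩ := exists_exp_rpow_mul_exp_gaussian_le (E := Eu d) hμ0.le hμ2 hc₂ hc₄
  refine ⟨c₁ * c₃ * rexp K * (2 * π / c₄) ^ ((d : ℝ) / 2), by positivity, c₂ * 2 ^ μ,
    by positivity, fun f hf hfb P hPm hPb t ht x => ?_⟩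
  have ht0 : 0 < t := ht.1
  have hb : 0 < c₄ / (2 * t) := by positivity
  have hbound : ∀ y, |f y * P t x y| ≤ c₁ * c₃ * t ^ (-((d : ℝ) + l) / 2) * rexp K *
      rexp (c₂ * 2 ^ μ * ‖x‖ ^ μ) * rexp (-(c₄ / (2 * t)) * ‖y - x‖ ^ 2) := fun y =>
    calc |f y * P t x y|
        ≤ c₁ * rexp (c₂ * ‖y‖ ^ μ) * (c₃ * t ^ (-((d : ℝ) + l) / 2) *
            rexp (-c₄ * ‖x - y‖ ^ 2 / t)) := by
          rw [abs_mul]; exact mul_le_mul (hfb y) (hPb t ht x y) (abs_nonneg _) (by positivity)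
      _ = c₁ * c₃ * t ^ (-((d : ℝ) + l) / 2) *
            (rexp (c₂ * ‖y‖ ^ μ) * rexp (-c₄ * ‖x - y‖ ^ 2 / t)) := by ring
      _ ≤ _ := (mul_le_mul_of_nonneg_left (hK t ht x y) (by positivity)).trans_eq (by ring)
  obtain ⟨hint, hle⟩ := integrable_and_abs_integral_le_of_abs_le_gaussian
    (hf.mul (hPm t ht x)).aestronglyMeasurable hb x hbound
  refine ⟨hint, hle.trans_eq ?_⟩
  rw [finrank_euclideanSpace_fin]
  linear_combination c₁ * c₃ * rexp K * rexp (c₂ * 2 ^ μ * ‖x‖ ^ μ) *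
    rpow_neg_add_div_two_mul_rpow_pi_div hc₄ ht0 d l

/-- The estimate underlying Proposition 3: integrating a function of exponential growth
`c₁ exp(c₂‖y‖^μ)`, `μ ∈ (0,2)`, against a kernel with a Gaussian bound
`c₃ t^{-(d+l)/2} exp(-c₄‖x-y‖²/t)` gives a result of order `t^{-l/2} exp(C₂‖x‖^μ)`. -/
theorem statement6 (d : ℕ) (hd : 1 ≤ d) (l : ℤ) (μ : ℝ) (hμ0 : 0 < μ) (hμ2 : μ < 2)
    (c₁ : ℝ) (hc₁ : 0 ≤ c₁) (c₂ : ℝ) (hc₂ : 0 ≤ c₂) (c₃ : ℝ) (hc₃ : 0 ≤ c₃)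
    (c₄ : ℝ) (hc₄ : 0 < c₄) :
    ∃ C₁ ≥ (0:ℝ), ∃ C₂ ≥ (0:ℝ), ∀ f : Eu d → ℝ, Measurable f →
      (∀ y : Eu d, |f y| ≤ c₁ * Real.exp (c₂ * ‖y‖ ^ μ)) →
      ∀ P : ℝ → Eu d → Eu d → ℝ,
        (∀ t ∈ Set.Ioc (0:ℝ) 1, ∀ x : Eu d, Measurable (P t x)) →
        (∀ t ∈ Set.Ioc (0:ℝ) 1, ∀ x y : Eu d,
          |P t x y| ≤ c₃ * t ^ (-((d : ℝ) + (l : ℝ)) / 2) * Real.exp (-c₄ * ‖x - y‖ ^ 2 / t)) →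
        ∀ t ∈ Set.Ioc (0:ℝ) 1, ∀ x : Eu d,
          Integrable (fun y => f y * P t x y) ∧
          |∫ y : Eu d, f y * P t x y| ≤ C₁ * t ^ (-(l : ℝ) / 2) * Real.exp (C₂ * ‖x‖ ^ μ) :=
  statement6_general d l μ hμ0 hμ2 c₁ hc₁ c₂ hc₂ c₃ hc₃ c₄ hc₄
end
end

section
/- Let d ≥ 1, c₂ > 0, c₃ ≥ 0 and c₄ > 0. Then there exist c₇ ≥ 0 and c₈ > 0 such that for all s, t with 0 < s ≤ t ≤ 1, all x, y ∈ ℝ^d, and every nonnegative measurable function ρ : ℝ^d → ℝ with ∫_{ℝ^d} ρ(z) dz ≤ 1 and ρ(z) ≤ c₃ s^{−d/2} exp(−c₄‖z−x‖²/s) for all z ∈ ℝ^d, one has ∫_{ℝ^d} exp(−c₂‖z−y‖²/t) ρ(z) dz ≤ c₇ exp(−c₈‖x−y‖²/t). -/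
open MeasureTheory Real

noncomputable section

/-! Since `‖x - y‖² ≤ 2 (‖z - x‖² + ‖z - y‖²)` and `s ≤ t`, the weight `exp (-c₂‖z - y‖²/t)` times
one half of the Gaussian bound `exp (-c₄‖z - x‖²/s) = exp (-c₄‖z - x‖²/(2s))²` on `ρ` is at most
`exp (-c₈‖x - y‖²/t)`. The other half integrates to `(2πs/c₄)^(d/2)`, which cancels the
normalisation `s^(-d/2)`. -/

open Module

section Gaussian

variable {V : Type*} [NormedAddCommGroup V] [InnerProductSpace ℝ V] [FiniteDimensional ℝ V]
  [MeasurableSpace V] [BorelSpace V]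

lemma integral_exp_neg_mul_norm_sub_sq_div {b s : ℝ} (hb : 0 < b) (hs : 0 < s) (x : V) :
    ∫ z : V, rexp (-b * ‖z - x‖ ^ 2 / s) = (π * s / b) ^ (finrank ℝ V / 2 : ℝ) := by
  have hbs : 0 < b / s := div_pos hb hs
  have hfun : (fun z : V => rexp (-b * ‖z - x‖ ^ 2 / s)) =
      fun z => rexp (-(b / s) * ‖z - x‖ ^ 2) := by
    ext z; ring_nf
  rw [hfun, integral_sub_right_eq_self (fun z : V => rexp (-(b / s) * ‖z‖ ^ 2)) x,
    GaussianFourier.integral_rexp_neg_mul_sq_norm hbs, div_div_eq_mul_div]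

lemma integrable_exp_neg_mul_norm_sub_sq_div {b s : ℝ} (hb : 0 < b) (hs : 0 < s) (x : V) :
    Integrable fun z : V => rexp (-b * ‖z - x‖ ^ 2 / s) :=
  Integrable.of_integral_ne_zero <| by
    rw [integral_exp_neg_mul_norm_sub_sq_div hb hs x]; positivity

lemma rpow_mul_integral_exp_neg_mul_norm_sub_sq_div {b s : ℝ} (hb : 0 < b) (hs : 0 < s) (x : V) :
    s ^ (-(finrank ℝ V : ℝ) / 2) * ∫ z : V, rexp (-b * ‖z - x‖ ^ 2 / s) =
      (π / b) ^ (finrank ℝ V / 2 : ℝ) := by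
  rw [integral_exp_neg_mul_norm_sub_sq_div hb hs, mul_div_right_comm,
    mul_rpow (by positivity) hs.le, mul_left_comm, ← rpow_add hs, neg_div, neg_add_cancel,
    rpow_zero, mul_one]

end Gaussian

lemma norm_sub_sq_le_two_mul_add {E : Type*} [SeminormedAddCommGroup E] (x y z : E) :
    ‖x - y‖ ^ 2 ≤ 2 * (‖z - x‖ ^ 2 + ‖z - y‖ ^ 2) := by
  have := norm_sub_le_norm_sub_add_norm_sub x z y
  rw [norm_sub_rev x z] at this
  nlinarith [norm_nonneg (x - y), sq_nonneg (‖z - x‖ - ‖z - y‖)]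

lemma exp_mul_exp_le_exp_min {E : Type*} [SeminormedAddCommGroup E] {a b s t : ℝ}
    (ha : 0 ≤ a) (hb : 0 ≤ b) (hs : 0 < s) (hst : s ≤ t) (x y z : E) :
    rexp (-a * ‖z - y‖ ^ 2 / t) * rexp (-b * ‖z - x‖ ^ 2 / s) ≤
      rexp (-(min a b / 2) * ‖x - y‖ ^ 2 / t) := by
  have ht : 0 < t := hs.trans_le hst
  have hscale : b * ‖z - x‖ ^ 2 / t ≤ b * ‖z - x‖ ^ 2 / s := by gcongr
  have hmin : min a b / 2 * ‖x - y‖ ^ 2 ≤ a * ‖z - y‖ ^ 2 + b * ‖z - x‖ ^ 2 := by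
    have := norm_sub_sq_le_two_mul_add x y z
    nlinarith [min_le_left a b, min_le_right a b, le_min ha hb, sq_nonneg ‖z - x‖,
      sq_nonneg ‖z - y‖]
  rw [← exp_add, exp_le_exp]
  have : min a b / 2 * ‖x - y‖ ^ 2 / t ≤ a * ‖z - y‖ ^ 2 / t + b * ‖z - x‖ ^ 2 / t := by
    rw [← add_div]; gcongr
  simp only [neg_mul, neg_div]
  linarith

theorem statement9_general (d : ℕ) (c₂ : ℝ) (hc₂ : 0 < c₂)
    (c₃ : ℝ) (hc₃ : 0 ≤ c₃) (c₄ : ℝ) (hc₄ : 0 < c₄) :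
    ∃ c₇ ≥ (0:ℝ), ∃ c₈ > (0:ℝ), ∀ s t : ℝ, 0 < s → s ≤ t → t ≤ 1 → ∀ x y : Eu d,
      ∀ ρ : Eu d → ℝ, Measurable ρ → (∀ z, 0 ≤ ρ z) → (∫ z : Eu d, ρ z) ≤ 1 →
        (∀ z : Eu d, ρ z ≤ c₃ * s ^ (-(d : ℝ) / 2) * Real.exp (-c₄ * ‖z - x‖ ^ 2 / s)) →
        ∫ z : Eu d, Real.exp (-c₂ * ‖z - y‖ ^ 2 / t) * ρ z ≤
          c₇ * Real.exp (-c₈ * ‖x - y‖ ^ 2 / t) := by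
  refine ⟨c₃ * (π / (c₄ / 2)) ^ ((d : ℝ) / 2), by positivity, min c₂ (c₄ / 2) / 2, by positivity,
    fun s t hs hst _ x y ρ _ hρ_nonneg _ hρ_le => ?_⟩
  set G : Eu d → ℝ := fun z => rexp (-(c₄ / 2) * ‖z - x‖ ^ 2 / s)
  set E := rexp (-(min c₂ (c₄ / 2) / 2) * ‖x - y‖ ^ 2 / t)
  have hpoint : ∀ z, rexp (-c₂ * ‖z - y‖ ^ 2 / t) * ρ z ≤
      E * (c₃ * s ^ (-(d : ℝ) / 2) * G z) := fun z => by
    have hsplit : rexp (-c₄ * ‖z - x‖ ^ 2 / s) = G z * G z := by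
      rw [← exp_add]; ring_nf
    calc rexp (-c₂ * ‖z - y‖ ^ 2 / t) * ρ z
        ≤ rexp (-c₂ * ‖z - y‖ ^ 2 / t) * (c₃ * s ^ (-(d : ℝ) / 2) * (G z * G z)) := by
          rw [← hsplit]; gcongr; exact hρ_le z
      _ = rexp (-c₂ * ‖z - y‖ ^ 2 / t) * G z * (c₃ * s ^ (-(d : ℝ) / 2) * G z) := by ring
      _ ≤ E * (c₃ * s ^ (-(d : ℝ) / 2) * G z) := by
          gcongr
          exact exp_mul_exp_le_exp_min hc₂.le (by positivity) hs hst x y z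
  have hG : Integrable G := integrable_exp_neg_mul_norm_sub_sq_div (by positivity) hs x
  calc ∫ z, rexp (-c₂ * ‖z - y‖ ^ 2 / t) * ρ z
      ≤ ∫ z, E * (c₃ * s ^ (-(d : ℝ) / 2) * G z) :=
        integral_mono_of_nonneg (.of_forall fun z => by have := hρ_nonneg z; positivity)
          ((hG.const_mul _).const_mul _) (.of_forall hpoint)
    _ = c₃ * (s ^ (-(d : ℝ) / 2) * ∫ z, G z) * E := by
        rw [integral_const_mul, integral_const_mul]; ring
    _ = c₃ * (π / (c₄ / 2)) ^ ((d : ℝ) / 2) * E := by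
        have hmass := rpow_mul_integral_exp_neg_mul_norm_sub_sq_div (by positivity) hs x
          (V := Eu d) (b := c₄ / 2)
        rw [finrank_euclideanSpace_fin] at hmass
        rw [hmass]

/-- Estimate (58) of the paper: if `ρ` is a sub-probability density concentrated around `x` at
scale `s ≤ t`, then `∫ exp(-c₂‖z-y‖²/t) ρ(z) dz ≤ c₇ exp(-c₈‖x-y‖²/t)`. -/
theorem statement9 (d : ℕ) (hd : 1 ≤ d) (c₂ : ℝ) (hc₂ : 0 < c₂)
    (c₃ : ℝ) (hc₃ : 0 ≤ c₃) (c₄ : ℝ) (hc₄ : 0 < c₄) :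
    ∃ c₇ ≥ (0:ℝ), ∃ c₈ > (0:ℝ), ∀ s t : ℝ, 0 < s → s ≤ t → t ≤ 1 → ∀ x y : Eu d,
      ∀ ρ : Eu d → ℝ, Measurable ρ → (∀ z, 0 ≤ ρ z) → (∫ z : Eu d, ρ z) ≤ 1 →
        (∀ z : Eu d, ρ z ≤ c₃ * s ^ (-(d : ℝ) / 2) * Real.exp (-c₄ * ‖z - x‖ ^ 2 / s)) →
        ∫ z : Eu d, Real.exp (-c₂ * ‖z - y‖ ^ 2 / t) * ρ z ≤
          c₇ * Real.exp (-c₈ * ‖x - y‖ ^ 2 / t) :=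
  statement9_general d c₂ hc₂ c₃ hc₃ c₄ hc₄
end
end
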